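/- Let N ≥ 1, b_i, c_i ≥ 0 for i ∈ {1,...,N}, and define for each Λ ⊆ {1,...,N}: R(Λ) = log₂(1 + (1/(N+1))·Σ_{i∈Λᶜ} b_i) + log₂(1 + Σ_{i∈Λ} c_i) − 1, and U(Λ) = log₂(1 + Σ_{i∈Λᶜ} b_i) + log₂(1 + (Σ_{i∈Λ} √c_i)²). Then min_Λ R(Λ) ≥ min_Λ U(Λ) − (log₂(N+1) + log₂ N + 1). -/

import Mathlib

/-! Both bounds are compared cut by cut. On the source side, scaling the received power by
`1 / (N + 1)` costs at most `log₂ (N + 1)`. On the destination side, Cauchy–Schwarz gives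
`(∑ i ∈ Λ, √cᵢ)² ≤ N ∑ i ∈ Λ, cᵢ`, so the coherent combining gain costs at most `log₂ N`.
The remaining `1` is the quantization penalty. -/

open Finset Real

lemma Real.logb_le_logb_add_logb_of_le_mul {b x k y : ℝ} (hb : 1 < b) (hx : 0 < x) (hk : 0 < k)
    (hy : 0 < y) (h : x ≤ k * y) : logb b x ≤ logb b k + logb b y := by
  rw [← logb_mul hk.ne' hy.ne']
  exact logb_le_logb_of_le hb hx h

lemma sq_sum_sqrt_le_card_mul_sum {ι : Type*} [Fintype ι] (s : Finset ι) {f : ι → ℝ}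
    (hf : ∀ i, 0 ≤ f i) : (∑ i ∈ s, √(f i)) ^ 2 ≤ Fintype.card ι * ∑ i ∈ s, f i := by
  calc (∑ i ∈ s, √(f i)) ^ 2 ≤ #s * ∑ i ∈ s, √(f i) ^ 2 := sq_sum_le_card_mul_sum_sq
    _ = #s * ∑ i ∈ s, f i := by simp only [sq_sqrt (hf _)]
    _ ≤ Fintype.card ι * ∑ i ∈ s, f i := by
        gcongr
        · exact sum_nonneg fun i _ => hf i
        · exact card_le_univ s

lemma logb_one_add_le_logb_add_logb_one_add_div {k x : ℝ} (hk : 1 ≤ k) (hx : 0 ≤ x) :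
    logb 2 (1 + x) ≤ logb 2 k + logb 2 (1 + (1 / k) * x) := by
  refine logb_le_logb_add_logb_of_le_mul one_lt_two (by positivity) (by positivity)
    (by positivity) ?_
  rw [mul_add, mul_one, ← mul_assoc, mul_one_div_cancel (by positivity), one_mul]
  linarith

lemma logb_one_add_sq_le_logb_add_logb_one_add {n C S : ℝ} (hn : 1 ≤ n) (hC : 0 ≤ C) (hS : S ^ 2 ≤ n * C) :
    logb 2 (1 + S ^ 2) ≤ logb 2 n + logb 2 (1 + C) :=
  logb_le_logb_add_logb_of_le_mul one_lt_two (by positivity) (by positivity) (by positivity)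
    (by nlinarith)

lemma ciInf_sub_le_ciInf {ι : Type*} [Finite ι] [Nonempty ι] {f g : ι → ℝ} {d : ℝ}
    (h : ∀ i, g i - d ≤ f i) : (⨅ i, g i) - d ≤ ⨅ i, f i :=
  le_ciInf fun i => by linarith [ciInf_le (Finite.bddBelow_range g) i, h i]

theorem stmt_14 (N : ℕ) (hN : 1 ≤ N) (b c : Fin N → ℝ)
    (hb : ∀ i, 0 ≤ b i) (hc : ∀ i, 0 ≤ c i)
    (R U : Finset (Fin N) → ℝ)
    (hR : ∀ Λ : Finset (Fin N), R Λ =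
      Real.logb 2 (1 + (1 / (N + 1)) * ∑ i ∈ Λᶜ, b i)
        + Real.logb 2 (1 + ∑ i ∈ Λ, c i) - 1)
    (hU : ∀ Λ : Finset (Fin N), U Λ =
      Real.logb 2 (1 + ∑ i ∈ Λᶜ, b i)
        + Real.logb 2 (1 + (∑ i ∈ Λ, Real.sqrt (c i)) ^ 2)) :
    (⨅ Λ : Finset (Fin N), R Λ) ≥
      (⨅ Λ : Finset (Fin N), U Λ) - (Real.logb 2 (N + 1) + Real.logb 2 N + 1) := by
  have hN1 : (1 : ℝ) ≤ N := by exact_mod_cast hN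
  refine ciInf_sub_le_ciInf fun Λ => ?_
  have source := logb_one_add_le_logb_add_logb_one_add_div (by linarith : (1 : ℝ) ≤ N + 1)
    (sum_nonneg fun i _ => hb i : 0 ≤ ∑ i ∈ Λᶜ, b i)
  have cauchySchwarz := sq_sum_sqrt_le_card_mul_sum Λ hc
  rw [Fintype.card_fin] at cauchySchwarz
  have destination := logb_one_add_sq_le_logb_add_logb_one_add hN1 (sum_nonneg fun i _ => hc i) cauchySchwarz
  rw [hR, hU]
  linarith
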